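/- arXiv:1709.06525 — 4 statements merged into one kernel-verified Lean document; each statement's English description precedes it below -/
import Mathlib

section
/- Let σ_0, σ_ij, σ_jk, σ_ik be unit vectors in R^r satisfying the SOS consistency constraints ⟨σ_ij, σ_jk⟩ = ⟨σ_ik, σ_0⟩, ⟨σ_ij, σ_ik⟩ = ⟨σ_jk, σ_0⟩, ⟨σ_jk, σ_ik⟩ = ⟨σ_ij, σ_0⟩. Then |⟨σ_ij, σ_0⟩ + ⟨σ_jk, σ_0⟩| ≤ 1 + ⟨σ_ik, σ_0⟩. -/
open RealInnerProductSpace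

theorem sos_triangle_inequality {r : ℕ}
    (σ0 σij σjk σik : EuclideanSpace ℝ (Fin r))
    (h0 : ‖σ0‖ = 1) (hij : ‖σij‖ = 1) (hjk : ‖σjk‖ = 1) (hik : ‖σik‖ = 1)
    (h1 : ⟪σij, σjk⟫ = ⟪σik, σ0⟫)
    (h2 : ⟪σij, σik⟫ = ⟪σjk, σ0⟫)
    (h3 : ⟪σjk, σik⟫ = ⟪σij, σ0⟫) :
    |⟪σij, σ0⟫ + ⟪σjk, σ0⟫| ≤ 1 + ⟪σik, σ0⟫ := by
  have n0 : ⟪σ0, σ0⟫ = 1 := by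
    rw [real_inner_self_eq_norm_sq, h0]; norm_num
  have nij : ⟪σij, σij⟫ = 1 := by
    rw [real_inner_self_eq_norm_sq, hij]; norm_num
  have njk : ⟪σjk, σjk⟫ = 1 := by
    rw [real_inner_self_eq_norm_sq, hjk]; norm_num
  have nik : ⟪σik, σik⟫ = 1 := by
    rw [real_inner_self_eq_norm_sq, hik]; norm_num
  have e1 : (0:ℝ) ≤ ⟪σij + σjk - σik - σ0, σij + σjk - σik - σ0⟫ :=
    real_inner_self_nonneg
  have e2 : (0:ℝ) ≤ ⟪σij + σjk + σik + σ0, σij + σjk + σik + σ0⟫ :=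
    real_inner_self_nonneg
  simp only [inner_add_left, inner_add_right, inner_sub_left, inner_sub_right,
    n0, nij, njk, nik, real_inner_comm σjk σij, real_inner_comm σik σij,
    real_inner_comm σ0 σij, real_inner_comm σik σjk, real_inner_comm σ0 σjk,
    real_inner_comm σ0 σik, h1, h2, h3] at e1 e2
  have a1 : ⟪σjk, σij⟫ = ⟪σik, σ0⟫ := (real_inner_comm σij σjk).trans h1
  have a2 : ⟪σik, σij⟫ = ⟪σjk, σ0⟫ := (real_inner_comm σij σik).trans h2
  have a3 : ⟪σik, σjk⟫ = ⟪σij, σ0⟫ := (real_inner_comm σjk σik).trans h3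
  have b1 : ⟪σ0, σij⟫ = ⟪σij, σ0⟫ := (real_inner_comm σij σ0)
  have b2 : ⟪σ0, σjk⟫ = ⟪σjk, σ0⟫ := (real_inner_comm σjk σ0)
  have b3 : ⟪σ0, σik⟫ = ⟪σik, σ0⟫ := (real_inner_comm σik σ0)
  rw [abs_le]
  constructor <;> linarith
end

section
/- For real numbers a, b, c each in [-1, 1] satisfying the triangle inequalities |a + b| ≤ 1 + c, |b + c| ≤ 1 + a, |a + c| ≤ 1 + b, there exists a probability distribution on {-1,1}³ whose pairwise correlations are exactly a, b, c. Equivalently, (a,b,c) lies in the convex hull of {(xy, yz, xz) : x, y, z ∈ {-1,1}}. -/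
theorem triangle_ineqs_imply_in_cut_polytope (a b c : ℝ)
    (ha : |a| ≤ 1) (hb : |b| ≤ 1) (hc : |c| ≤ 1)
    (h1 : |a + b| ≤ 1 + c) (h2 : |b + c| ≤ 1 + a) (h3 : |a + c| ≤ 1 + b) :
    (a, b, c) ∈ convexHull ℝ
      {p : ℝ × ℝ × ℝ | ∃ x y z : ℝ, (x = 1 ∨ x = -1) ∧ (y = 1 ∨ y = -1) ∧
        (z = 1 ∨ z = -1) ∧ p = (x * y, y * z, x * z)} := by
  set S : Set (ℝ × ℝ × ℝ) :=
    {p : ℝ × ℝ × ℝ | ∃ x y z : ℝ, (x = 1 ∨ x = -1) ∧ (y = 1 ∨ y = -1) ∧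
        (z = 1 ∨ z = -1) ∧ p = (x * y, y * z, x * z)} with hS
  obtain ⟨h1a, h1b⟩ := abs_le.mp h1
  obtain ⟨h2a, h2b⟩ := abs_le.mp h2
  obtain ⟨h3a, h3b⟩ := abs_le.mp h3
  have hp1 : ((1:ℝ), (1:ℝ), (1:ℝ)) ∈ S :=
    ⟨1, 1, 1, Or.inl rfl, Or.inl rfl, Or.inl rfl, by norm_num⟩
  have hp2 : ((1:ℝ), (-1:ℝ), (-1:ℝ)) ∈ S :=
    ⟨1, 1, -1, Or.inl rfl, Or.inl rfl, Or.inr rfl, by norm_num⟩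
  have hp3 : ((-1:ℝ), (1:ℝ), (-1:ℝ)) ∈ S :=
    ⟨-1, 1, 1, Or.inr rfl, Or.inl rfl, Or.inl rfl, by norm_num⟩
  have hp4 : ((-1:ℝ), (-1:ℝ), (1:ℝ)) ∈ S :=
    ⟨-1, 1, -1, Or.inr rfl, Or.inl rfl, Or.inr rfl, by norm_num⟩
  have key := (convex_convexHull ℝ S).sum_mem (t := (Finset.univ : Finset (Fin 4)))
    (w := ![(1+a+b+c)/4, (1+a-b-c)/4, (1-a+b-c)/4, (1-a-b+c)/4])
    (z := ![((1:ℝ),(1:ℝ),(1:ℝ)), (1,-1,-1), (-1,1,-1), (-1,-1,1)])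
    (by
      intro i _
      fin_cases i <;> simp <;> linarith)
    (by simp [Fin.sum_univ_four]; ring)
    (by
      intro i _
      fin_cases i <;> simp <;>
        [exact subset_convexHull ℝ S hp1; exact subset_convexHull ℝ S hp2;
         exact subset_convexHull ℝ S hp3; exact subset_convexHull ℝ S hp4])
  have heq : ∑ i : Fin 4,
      (![(1+a+b+c)/4, (1+a-b-c)/4, (1-a+b-c)/4, (1-a-b+c)/4] i) •
      (![((1:ℝ),(1:ℝ),(1:ℝ)), (1,-1,-1), (-1,1,-1), (-1,-1,1)] i) = (a, b, c) := by
    simp [Fin.sum_univ_four, Prod.ext_iff, Prod.smul_mk]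
    refine ⟨by ring, by ring, by ring⟩
  rwa [heq] at key
end

section
/- Summing the N−2 triangle inequalities obtained from triangulating a chordless cycle of length N yields the cyclic inequality: if a symmetric matrix M satisfies |M_{ij} + M_{jk}| ≤ 1 + M_{ik} for all triples i,j,k among the cycle's vertices, then for every odd subset F of the cycle's edge set C, M(F) − M(C∖F) ≥ 2 − |C|. -/
/-!
Triangulate the cycle by the fan from `v 0`. Writing `d k = M (v 0) (v k)`, the triangle
condition on `v 0, v k, v (k+1)` says `-1 ≤ α d k + β M (v k) (v (k+1)) + α β d (k+1)` for all
signs `α, β`. Chaining these along the path `v 0, …, v k` with edge signs `ε i` gives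
`1 - k ≤ ∑ ε i M (v i) (v (i+1)) + (∏ -ε i) d k`, starting from `d 0 = 1`. At `k = N` the path has
closed up (its last triangle is degenerate), so `d N = 1`, and `∏ -ε i = (-1) ^ |F| = -1`.
-/

open Finset Fin.NatCast

lemma neg_one_le_signed_sum_of_triangle {a b c α β : ℝ} (hα : |α| = 1) (hβ : |β| = 1)
    (hab : |a + b| ≤ 1 + c) (hcb : |c + b| ≤ 1 + a) (hac : |a + c| ≤ 1 + b) :
    -1 ≤ α * a + β * b + α * β * c := by
  rw [abs_le] at hab hcb hac
  rcases (abs_eq zero_le_one).mp hα with rfl | rfl <;>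
    rcases (abs_eq zero_le_one).mp hβ with rfl | rfl <;> linarith

lemma one_sub_le_signed_path_sum (d : ℕ → ℕ → ℝ) (hsymm : ∀ i j, d i j = d j i)
    (htri : ∀ i j k, |d i j + d j k| ≤ 1 + d i k) (hdiag : d 0 0 = 1)
    (ε : ℕ → ℝ) (hε : ∀ i, |ε i| = 1) (k : ℕ) :
    1 - k ≤ ∑ i ∈ range k, ε i * d i (i + 1) + (∏ i ∈ range k, -ε i) * d 0 k := by
  induction k with
  | zero => simp [hdiag]
  | succ k ih =>
    have hsign : |-∏ i ∈ range k, -ε i| = 1 := by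
      rw [abs_neg, abs_prod]; exact prod_eq_one fun i _ => by rw [abs_neg, hε]
    have htriangle := neg_one_le_signed_sum_of_triangle hsign (hε k)
      (htri 0 k (k + 1)) (hsymm (k + 1) k ▸ htri 0 (k + 1) k) (hsymm k 0 ▸ htri k 0 (k + 1))
    rw [sum_range_succ, prod_range_succ]
    push_cast
    linarith

theorem triangle_conditions_imply_cyclic_inequality_general {n N : ℕ}
    (M : Matrix (Fin n) (Fin n) ℝ)
    (hsymm : M.IsSymm) (hdiag : ∀ i, M i i = 1)
    (v : Fin N → Fin n)
    (htri : ∀ i j k : Fin N,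
      |M (v i) (v j) + M (v j) (v k)| ≤ 1 + M (v i) (v k))
    (F : Finset (Fin N)) (hF : Odd F.card) :
    (∑ i ∈ F, M (v i) (v (finRotate N i)))
      - ∑ i ∈ Fᶜ, M (v i) (v (finRotate N i)) ≥ 2 - (N : ℝ) := by
  have : NeZero N := ⟨by rintro rfl; simp [eq_empty_of_isEmpty F] at hF⟩
  set ε : Fin N → ℝ := fun i => if i ∈ F then 1 else -1
  have hε : ∀ i, |ε i| = 1 := fun i => by by_cases hi : i ∈ F <;> simp [ε, hi]
  have hsum : (∑ i ∈ F, M (v i) (v (finRotate N i))) - ∑ i ∈ Fᶜ, M (v i) (v (finRotate N i))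
      = ∑ i, ε i * M (v i) (v (finRotate N i)) := by
    rw [← sum_add_sum_compl F, sub_eq_add_neg, ← sum_neg_distrib]
    congr 1 <;> refine sum_congr rfl fun i hi => ?_ <;> simp_all [ε]
  have hprod : ∏ i, -ε i = (-1 : ℝ) := by
    simp only [ε, apply_ite (fun x : ℝ => -x), neg_neg, prod_ite_mem, univ_inter, prod_const]
    exact hF.neg_one_pow
  have hpath := one_sub_le_signed_path_sum (fun i j => M (v i) (v j))
    (fun i j => hsymm.apply _ _) (fun i j k => htri i j k) (hdiag _)
    (fun i => ε i) (fun i => hε i) N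
  simp only [sum_range, prod_range, Nat.cast_succ, Fin.cast_val_eq_self, ← finRotate_apply,
    Nat.cast_zero, Fin.natCast_self, hprod, hdiag] at hpath
  rw [hsum]
  linarith

theorem triangle_conditions_imply_cyclic_inequality {n N : ℕ} (hN : 3 ≤ N)
    (M : Matrix (Fin n) (Fin n) ℝ)
    (hsymm : M.IsSymm) (hdiag : ∀ i, M i i = 1) (hbd : ∀ i j, |M i j| ≤ 1)
    (v : Fin N → Fin n) (hv : Function.Injective v)
    (htri : ∀ i j k : Fin N,
      |M (v i) (v j) + M (v j) (v k)| ≤ 1 + M (v i) (v k))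
    (F : Finset (Fin N)) (hF : Odd F.card) :
    (∑ i ∈ F, M (v i) (v (finRotate N i)))
      - ∑ i ∈ Fᶜ, M (v i) (v (finRotate N i)) ≥ 2 - (N : ℝ) :=
  triangle_conditions_imply_cyclic_inequality_general M hsymm hdiag v htri F hF
end

section
/- Let σ be any feasible point of PSOS(4) with a circular covering R of graph G (every chordless cycle of G is contained in some region), and define M_{ij} = ⟨σ_i, σ_j⟩, M_{ii} = 1. Then M is positive semidefinite and lies in the metric polytope of G: |M_e| ≤ 1 for all edges and M(F) − M(C∖F) ≥ 2 − |C| for every simple cycle C and odd F ⊆ C. -/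
/-!
Within a region the unit vectors `σ₀, τ i j, τ j k, τ i k` have, by the undirected, triangle and
loop constraints, pairwise inner products `M i j, M j k, M i k`, each occurring twice, so
`‖σ₀ ± τ i j ± τ j k ± τ i k‖² ≥ 0` is a triangle inequality of the metric polytope. Chaining
triangles from a base vertex gives every cycle inequality for closed walks inside a region.
A chord splits a cycle into two shorter cycles; giving the chord opposite signs in the two, their
cycle inequalities add up to that of the original cycle. By induction on the length only chordless
cycles remain, and circularity puts each of them inside a region.
-/

open RealInnerProductSpace Finset Fin.NatCast

variable {V E : Type*} [NormedAddCommGroup E] [InnerProductSpace ℝ E]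

theorem neg_one_le_sum_inner_of_norm_eq_one {x₀ x₁ x₂ x₃ : E}
    (h₀ : ‖x₀‖ = 1) (h₁ : ‖x₁‖ = 1) (h₂ : ‖x₂‖ = 1) (h₃ : ‖x₃‖ = 1)
    (h₀₁ : ⟪x₀, x₁⟫ = ⟪x₂, x₃⟫) (h₀₂ : ⟪x₀, x₂⟫ = ⟪x₁, x₃⟫) (h₀₃ : ⟪x₀, x₃⟫ = ⟪x₁, x₂⟫)
    {a b c : ℤˣ} (habc : a * b * c = 1) :
    -1 ≤ a * ⟪x₀, x₁⟫ + b * ⟪x₀, x₂⟫ + c * ⟪x₀, x₃⟫ := by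
  obtain rfl : c = a * b := by
    rw [← mul_right_inj (a * b), habc, Int.units_mul_self]
  have h := real_inner_self_nonneg
    (x := x₀ + (a : ℝ) • x₁ + (b : ℝ) • x₂ + ((a * b : ℤˣ) : ℝ) • x₃)
  simp only [inner_add_left, inner_add_right, real_inner_smul_left, real_inner_smul_right,
    real_inner_comm x₀ x₁, real_inner_comm x₀ x₂, real_inner_comm x₀ x₃, real_inner_comm x₁ x₂,
    real_inner_comm x₁ x₃, real_inner_comm x₂ x₃] at h
  simp only [real_inner_self_eq_norm_sq, h₀, h₁, h₂, h₃] at h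
  rcases Int.units_eq_one_or a with rfl | rfl <;> rcases Int.units_eq_one_or b with rfl | rfl <;>
    norm_num at h ⊢ <;> linarith

def TriangleIneqOn (M : Matrix V V ℝ) (S : Set V) : Prop :=
  ∀ i ∈ S, ∀ j ∈ S, ∀ k ∈ S, ∀ a b c : ℤˣ, a * b * c = 1 →
    -1 ≤ a * M i j + b * M j k + c * M i k

theorem triangleIneqOn_gram {S : Set V} {σ₀ : E} {σ : V → E} {τ : V → V → E}
    (hσ₀ : ‖σ₀‖ = 1) (hσ : ∀ i ∈ S, ‖σ i‖ = 1) (hτ : ∀ i ∈ S, ∀ j ∈ S, ‖τ i j‖ = 1)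
    (hund : ∀ i ∈ S, ∀ j ∈ S, ⟪σ i, σ j⟫ = ⟪τ i j, σ₀⟫)
    (htri : ∀ i ∈ S, ∀ j ∈ S, ∀ k ∈ S, ⟪τ i j, τ j k⟫ = ⟪τ i k, σ₀⟫)
    (hloop : ∀ i ∈ S, ∀ j ∈ S, ∀ k ∈ S, ∀ l ∈ S, ⟪τ i j, τ k l⟫ = ⟪τ i k, τ j l⟫) :
    TriangleIneqOn (Matrix.gram ℝ σ) S := by
  have hdiag : ∀ i ∈ S, τ i i = σ₀ := fun i hi ↦
    (inner_eq_one_iff_of_norm_eq_one (hτ i hi i hi) hσ₀).mp <| by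
      rw [← hund i hi i hi, real_inner_self_eq_norm_sq, hσ i hi, one_pow]
  have hσ₀τ : ∀ i ∈ S, ∀ j ∈ S, ⟪σ₀, τ i j⟫ = ⟪σ i, σ j⟫ := fun i hi j hj ↦ by
    rw [real_inner_comm, hund i hi j hj]
  intro i hi j hj k hk a b c habc
  have key := neg_one_le_sum_inner_of_norm_eq_one hσ₀ (hτ i hi j hj) (hτ j hj k hk)
    (hτ i hi k hk) ?_ ?_ ?_ habc
  · simpa only [Matrix.gram_apply, hσ₀τ _ hi _ hj, hσ₀τ _ hj _ hk, hσ₀τ _ hi _ hk] using key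
  · rw [hloop j hj k hk i hi k hk, hdiag k hk, ← hund j hj i hi, hσ₀τ i hi j hj, real_inner_comm]
  · rw [hloop i hi j hj i hi k hk, hdiag i hi]
  · rw [htri i hi j hj k hk, real_inner_comm]

def walkSum (M : Matrix V V ℝ) (u : ℕ → V) (ε : ℕ → ℤˣ) (N : ℕ) : ℝ :=
  ∑ t ∈ range N, (ε t : ℝ) * M (u t) (u (t + 1))

section WalkSum

variable (M : Matrix V V ℝ) (u : ℕ → V) (ε : ℕ → ℤˣ)

theorem walkSum_succ (N : ℕ) :
    walkSum M u ε (N + 1) = walkSum M u ε N + ε N * M (u N) (u (N + 1)) :=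
  sum_range_succ _ _

theorem walkSum_add (a d : ℕ) : walkSum M u ε (a + d) =
    walkSum M u ε a + walkSum M (fun t ↦ u (a + t)) (fun t ↦ ε (a + t)) d := by
  simp only [walkSum, sum_range_add, add_assoc]

end WalkSum

/-- Signs with `∏ ε = (-1) ^ (N + 1)` are those with an odd number `|F|` of `+1`s, so this is
`M(F) - M(C \ F) ≥ 2 - |C|` for the closed walk `C = u 0, …, u N`. -/
def CycleInequality (M : Matrix V V ℝ) (u : ℕ → V) (N : ℕ) : Prop :=
  ∀ ε : ℕ → ℤˣ, ∏ t ∈ range N, ε t = (-1) ^ (N + 1) → 2 - (N : ℝ) ≤ walkSum M u ε N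

namespace TriangleIneqOn

variable {M : Matrix V V ℝ} {S : Set V} {u : ℕ → V}

/-- The cycle inequality for the path `u 0, …, u m` closed by an edge back to `u 0`, whose sign
fixes the sign product; each induction step is the triangle inequality on `u 0, u m, u (m + 1)`. -/
theorem le_walkSum_add (hS : TriangleIneqOn M S) (hdiag : ∀ i ∈ S, M i i = 1)
    (ε : ℕ → ℤˣ) {m : ℕ} (hu : ∀ t ≤ m, u t ∈ S) :
    1 - (m : ℝ) ≤ walkSum M u ε m + ((-1) ^ m * ∏ t ∈ range m, ε t : ℤˣ) * M (u 0) (u m) := by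
  induction m with
  | zero => simp [walkSum, hdiag _ (hu 0 le_rfl)]
  | succ m ih =>
    set c : ℤˣ := (-1) ^ m * ∏ t ∈ range m, ε t
    have htri := hS _ (hu 0 (by omega)) _ (hu m (by omega)) _ (hu (m + 1) le_rfl)
      (-c) (ε m) (-c * ε m)
      (by rw [mul_mul_mul_comm, Int.units_mul_self, Int.units_mul_self, one_mul])
    have ih := ih fun t ht ↦ hu t (by omega)
    have hcoef : ((-1) ^ (m + 1) * ∏ t ∈ range (m + 1), ε t : ℤˣ) = -c * ε m := by
      simp only [c, prod_range_succ, pow_succ, mul_neg_one, neg_mul, mul_assoc]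
    rw [walkSum_succ, hcoef]
    push_cast at htri ⊢
    linarith

theorem cycleInequality (hS : TriangleIneqOn M S) (hdiag : ∀ i ∈ S, M i i = 1) {N : ℕ}
    (hu : ∀ t ≤ N, u t ∈ S) (hclosed : u N = u 0) : CycleInequality M u N := by
  intro ε hε
  have h := hS.le_walkSum_add hdiag ε hu
  rw [hε, hclosed, hdiag _ (hu 0 (Nat.zero_le N)), ← pow_add,
    show N + (N + 1) = 2 * N + 1 by ring, pow_succ, pow_mul] at h
  norm_num at h
  linarith

end TriangleIneqOn

/-! For a chord between `u a` and `u (a + d)`: the cycle `u a, …, u (a + d)` closed by the chord,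
and the cycle `u 0, …, u a, u (a + d), u (a + d + 1), …` that takes the chord instead. -/

def chordInner (u : ℕ → V) (a d : ℕ) : ℕ → V := fun t ↦ u (a + t % (d + 1))

def chordOuter (u : ℕ → V) (a d : ℕ) : ℕ → V := fun t ↦ u (if t ≤ a then t else t + d - 1)

section ChordSplit

variable (M : Matrix V V ℝ) (u : ℕ → V) (ε : ℕ → ℤˣ) (a d e : ℕ)

theorem walkSum_chordInner (c : ℤˣ) :
    walkSum M (chordInner u a d) (fun t ↦ if t < d then ε (a + t) else c) (d + 1) =
      walkSum M (fun t ↦ u (a + t)) (fun t ↦ ε (a + t)) d + c * M (u (a + d)) (u a) := by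
  rw [walkSum, sum_range_succ, walkSum]
  congr 1
  · refine sum_congr rfl fun t ht ↦ ?_
    have ht := mem_range.mp ht
    simp only [chordInner, if_pos ht, Nat.mod_eq_of_lt (by omega : t < d + 1),
      Nat.mod_eq_of_lt (by omega : t + 1 < d + 1)]
  · simp [chordInner]

theorem walkSum_chordOuter (c : ℤˣ) :
    walkSum M (chordOuter u a d)
        (fun t ↦ if t < a then ε t else if t = a then c else ε (t + d - 1)) (a + 1 + e) =
      walkSum M u ε a + c * M (u a) (u (a + d)) +
        walkSum M (fun t ↦ u (a + d + t)) (fun t ↦ ε (a + d + t)) e := by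
  rw [walkSum_add, walkSum_succ]
  congr 2
  · refine sum_congr rfl fun t ht ↦ ?_
    have ht := mem_range.mp ht
    simp only [chordOuter, if_pos ht, if_pos ht.le, if_pos (Nat.succ_le_of_lt ht)]
  · simp only [chordOuter, lt_irrefl, le_refl, if_true, if_false, Nat.not_succ_le_self]
    rw [Nat.add_right_comm, Nat.add_sub_cancel]
  · funext t
    simp only [chordOuter, show ¬ a + 1 + t ≤ a by omega, if_false,
      show a + 1 + t + d - 1 = a + d + t by omega]
  · funext t
    simp only [show ¬ a + 1 + t < a by omega, show a + 1 + t ≠ a by omega, if_false,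
      show a + 1 + t + d - 1 = a + d + t by omega]

variable {M u a d e} in
theorem CycleInequality.of_chord (hM : M.IsSymm)
    (hinner : CycleInequality M (chordInner u a d) (d + 1))
    (houter : CycleInequality M (chordOuter u a d) (a + 1 + e)) :
    CycleInequality M u (a + d + e) := by
  intro ε hε
  set A := ∏ t ∈ range a, ε t
  set P := ∏ t ∈ range d, ε (a + t)
  set B := ∏ t ∈ range e, ε (a + d + t)
  have hAPB : A * P * B = (-1) ^ (a + d + e + 1) := by
    rw [← hε, prod_range_add, prod_range_add]
  -- the sign of the chord that makes the product of the signs of the inner cycle right; its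
  -- negative then does the same for the outer cycle
  set c : ℤˣ := (-1) ^ d * P
  have h₁ := hinner (fun t ↦ if t < d then ε (a + t) else c) <| by
    rw [prod_range_succ, if_neg (lt_irrefl d), prod_congr rfl fun t ht ↦ if_pos (mem_range.mp ht),
      mul_left_comm, Int.units_mul_self, mul_one, pow_succ, pow_succ, mul_assoc, neg_one_mul,
      neg_neg, mul_one]
  have h₂ := houter (fun t ↦ if t < a then ε t else if t = a then -c else ε (t + d - 1)) <| by
    have hshift : ∀ t, (if a + 1 + t < a then ε (a + 1 + t)
        else if a + 1 + t = a then -c else ε (a + 1 + t + d - 1)) = ε (a + d + t) := fun t ↦ by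
      rw [if_neg (by omega), if_neg (by omega), show a + 1 + t + d - 1 = a + d + t by omega]
    rw [prod_range_add, prod_range_succ, if_neg (lt_irrefl a), if_pos rfl,
      prod_congr rfl fun t ht ↦ if_pos (mem_range.mp ht), prod_congr rfl fun t _ ↦ hshift t]
    have hAPB' := congrArg Units.val hAPB
    have hsq : ((-1 : ℤ) ^ d) ^ 2 = 1 := by rw [← pow_mul, pow_mul', neg_one_sq, one_pow]
    change A * -c * B = _
    ext
    push_cast [c] at hAPB' ⊢
    linear_combination (-(-1 : ℤ) ^ d) * hAPB' - (-1 : ℤ) ^ (a + e + 1) * hsq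
  have hsymm : M (u (a + d)) (u a) = M (u a) (u (a + d)) := hM.apply _ _
  rw [walkSum_chordInner, hsymm] at h₁
  rw [walkSum_chordOuter] at h₂
  rw [walkSum_add, walkSum_add]
  push_cast at h₁ h₂ ⊢
  linarith

end ChordSplit

namespace SimpleGraph

variable (G : SimpleGraph V)

/-- The cycle `u 0, …, u (N - 1)` of `G`; only the values `u t` with `t ≤ N` matter. -/
structure IsCycleSeq (u : ℕ → V) (N : ℕ) : Prop where
  adj : ∀ t < N, G.Adj (u t) (u (t + 1))
  closed : u N = u 0
  injOn : Set.InjOn u (Set.Iio N)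

/-- No chord `u a – u (a + d)` with `N = a + d + e`: `2 ≤ d` and `2 ≤ a + e` exclude the edges of
the cycle. -/
def IsChordlessSeq (u : ℕ → V) (N : ℕ) : Prop :=
  ∀ a d e, N = a + d + e → 2 ≤ d → 1 ≤ e → 2 ≤ a + e → ¬ G.Adj (u a) (u (a + d))

variable {G} {u : ℕ → V} {a d e : ℕ}

theorem IsCycleSeq.chordInner (hu : G.IsCycleSeq u (a + d + e)) (he : 1 ≤ e)
    (hchord : G.Adj (u a) (u (a + d))) : G.IsCycleSeq (chordInner u a d) (d + 1) where
  adj t ht := by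
    simp only [_root_.chordInner]
    rcases Nat.lt_or_ge t d with htd | htd
    · rw [Nat.mod_eq_of_lt (by omega), Nat.mod_eq_of_lt (by omega), ← add_assoc]
      exact hu.adj _ (by omega)
    · obtain rfl : t = d := by omega
      rw [Nat.mod_eq_of_lt (by omega), Nat.mod_self, add_zero]
      exact hchord.symm
  closed := by simp [_root_.chordInner]
  injOn s hs t ht hst := by
    simp only [_root_.chordInner, Set.mem_Iio] at hs ht hst
    rw [Nat.mod_eq_of_lt hs, Nat.mod_eq_of_lt ht] at hst
    have := hu.injOn (Set.mem_Iio.mpr (by omega)) (Set.mem_Iio.mpr (by omega)) hst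
    omega

theorem IsCycleSeq.chordOuter (hu : G.IsCycleSeq u (a + d + e)) (hd : 1 ≤ d)
    (hchord : G.Adj (u a) (u (a + d))) : G.IsCycleSeq (chordOuter u a d) (a + 1 + e) where
  adj t ht := by
    simp only [_root_.chordOuter]
    rcases lt_trichotomy t a with hta | rfl | hta
    · rw [if_pos hta.le, if_pos (Nat.succ_le_of_lt hta)]
      exact hu.adj _ (by omega)
    · rw [if_pos le_rfl, if_neg (by omega), Nat.add_right_comm, Nat.add_sub_cancel]
      exact hchord
    · rw [if_neg (by omega), if_neg (by omega), show t + 1 + d - 1 = t + d - 1 + 1 by omega]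
      exact hu.adj _ (by omega)
  closed := by
    simp only [_root_.chordOuter, if_neg (show ¬ a + 1 + e ≤ a by omega), if_pos (Nat.zero_le a),
      show a + 1 + e + d - 1 = a + d + e by omega, hu.closed]
  injOn s hs t ht hst := by
    simp only [_root_.chordOuter, Set.mem_Iio] at hs ht hst
    have := hu.injOn (Set.mem_Iio.mpr (by split_ifs <;> omega))
      (Set.mem_Iio.mpr (by split_ifs <;> omega)) hst
    split_ifs at this <;> omega

variable {M : Matrix V V ℝ}

theorem cycleInequality_of_forall_chordless (hM : M.IsSymm)
    (hchordless : ∀ N u, 3 ≤ N → G.IsCycleSeq u N → G.IsChordlessSeq u N → CycleInequality M u N)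
    {N : ℕ} (hN : 3 ≤ N) (hu : G.IsCycleSeq u N) : CycleInequality M u N := by
  induction N using Nat.strong_induction_on generalizing u with
  | _ N ih =>
    by_cases hch : G.IsChordlessSeq u N
    · exact hchordless N u hN hu hch
    simp only [IsChordlessSeq, not_forall, not_not] at hch
    obtain ⟨a, d, e, rfl, hd, he, hae, hchord⟩ := hch
    exact .of_chord hM (ih (d + 1) (by omega) (by omega) (hu.chordInner he hchord))
      (ih (a + 1 + e) (by omega) (by omega) (hu.chordOuter (by omega) hchord))

theorem IsCycleSeq.apply_finRotate {N : ℕ} (hu : G.IsCycleSeq u N) (k : Fin N) :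
    u (finRotate N k) = u (k + 1) := by
  obtain ⟨n, rfl⟩ : ∃ n, N = n + 1 := ⟨N - 1, by have := k.pos; omega⟩
  rw [coe_finRotate]
  split_ifs with h
  · rw [h, Fin.val_last, hu.closed]
  · rfl

theorem IsCycleSeq.adj_finRotate {N : ℕ} (hu : G.IsCycleSeq u N) (k : Fin N) :
    G.Adj (u k) (u (finRotate N k)) :=
  hu.apply_finRotate k ▸ hu.adj k k.isLt

theorem IsCycleSeq.injective_fin {N : ℕ} (hu : G.IsCycleSeq u N) :
    Function.Injective fun k : Fin N ↦ u k :=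
  fun k l h ↦ Fin.ext (hu.injOn k.isLt l.isLt h)

theorem IsChordlessSeq.fin {N : ℕ} (hch : G.IsChordlessSeq u N) (k l : Fin N) (hkl : k ≠ l)
    (hl : l ≠ finRotate N k) (hk : k ≠ finRotate N l) : ¬ G.Adj (u k) (u l) := by
  intro hadj
  obtain ⟨n, rfl⟩ : ∃ n, N = n + 1 := ⟨N - 1, by have := k.pos; omega⟩
  wlog hlt : k < l generalizing k l
  · exact this l k hkl.symm hk hl hadj.symm (lt_of_le_of_ne (not_lt.mp hlt) hkl.symm)
  have hl' : (l : ℕ) ≠ k + 1 := fun h ↦ hl <| Fin.ext <| by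
    rw [coe_finRotate, if_neg (Fin.ne_last_of_lt hlt), h]
  have hk' : ¬ ((k : ℕ) = 0 ∧ (l : ℕ) = n) := fun ⟨h₀, hn⟩ ↦ hk <| Fin.ext <| by
    rw [coe_finRotate, if_pos (Fin.ext hn), h₀]
  have hlt' : (k : ℕ) < l := hlt
  refine hch k (l - k) (n + 1 - l) (by omega) (by omega) (by omega) (by omega) ?_
  rwa [Nat.add_sub_cancel' hlt'.le]

theorem IsCycleSeq.mem_of_forall_fin {S : Set V} {N : ℕ} (hu : G.IsCycleSeq u N) (hN : 0 < N)
    (h : ∀ k : Fin N, u k ∈ S) : ∀ t ≤ N, u t ∈ S := by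
  intro t ht
  rcases ht.lt_or_eq with ht | rfl
  · exact h ⟨t, ht⟩
  · rw [hu.closed]
    exact h ⟨0, hN⟩

theorem isCycleSeq_of_fin {N : ℕ} [NeZero N] {v : Fin N → V} (hv : Function.Injective v)
    (hadj : ∀ k, G.Adj (v k) (v (finRotate N k))) : G.IsCycleSeq (fun t : ℕ ↦ v (t : Fin N)) N where
  adj t _ := by simpa using hadj (t : Fin N)
  closed := by simp
  injOn s hs t ht hst := by
    have := congrArg Fin.val (hv hst)
    rwa [Fin.val_natCast, Fin.val_natCast, Nat.mod_eq_of_lt hs, Nat.mod_eq_of_lt ht] at this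

end SimpleGraph

theorem CycleInequality.fin {M : Matrix V V ℝ} {N : ℕ} [NeZero N] {v : Fin N → V}
    (h : CycleInequality M (fun t : ℕ ↦ v (t : Fin N)) N) (F : Finset (Fin N)) (hF : Odd F.card) :
    2 - (N : ℝ) ≤ ∑ k ∈ F, M (v k) (v (finRotate N k)) - ∑ k ∈ Fᶜ, M (v k) (v (finRotate N k)) := by
  set ε : ℕ → ℤˣ := fun t ↦ if (t : Fin N) ∈ F then 1 else -1
  have hprod : ∏ t ∈ range N, ε t = (-1) ^ (N + 1) := by
    rw [← Fin.prod_univ_eq_prod_range]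
    simp only [ε, Fin.cast_val_eq_self, prod_ite, filter_mem_eq_inter, univ_inter, filter_not,
      prod_const_one, one_mul, prod_const, card_univ_sdiff, Fintype.card_fin]
    obtain ⟨k, hk⟩ := hF
    have hFN : #F ≤ N := (card_le_univ F).trans_eq (Fintype.card_fin N)
    rw [show N + 1 = N - #F + 2 * (k + 1) by omega, pow_add, pow_mul, neg_one_sq, one_pow, mul_one]
  convert h ε hprod using 1
  rw [walkSum, ← Fin.sum_univ_eq_sum_range
    (fun t ↦ (ε t : ℝ) * M (v (t : Fin N)) (v ((t + 1 : ℕ) : Fin N)))]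
  simp only [ε, Fin.cast_val_eq_self, Nat.cast_succ, finRotate_apply, apply_ite Units.val,
    apply_ite (Int.cast : ℤ → ℝ), Units.val_one, Units.val_neg, Int.cast_one, Int.cast_neg,
    ite_mul, one_mul, neg_one_mul, sum_ite, filter_mem_eq_inter, univ_inter, filter_not,
    sum_neg_distrib, ← compl_eq_univ_sdiff, sub_eq_add_neg]

theorem psos4_feasible_gram_in_metric_polytope_general {n r : ℕ}
    (G : SimpleGraph (Fin n)) (𝓡 : Set (Set (Fin n)))
    -- covering
    (hcovE : ∀ i j, G.Adj i j → ∃ R ∈ 𝓡, i ∈ R ∧ j ∈ R)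
    -- circular: every chordless cycle of G is contained in some region
    (hcirc : ∀ (N : ℕ), 3 ≤ N → ∀ v : Fin N → Fin n, Function.Injective v →
      (∀ k, G.Adj (v k) (v (finRotate N k))) →
      (∀ k l : Fin N, k ≠ l → l ≠ finRotate N k → k ≠ finRotate N l →
        ¬ G.Adj (v k) (v l)) →
      ∃ R ∈ 𝓡, ∀ k, v k ∈ R)
    -- PSOS(4) feasible point
    (σ0 : EuclideanSpace ℝ (Fin r)) (σ : Fin n → EuclideanSpace ℝ (Fin r))
    (τ : Fin n → Fin n → EuclideanSpace ℝ (Fin r))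
    (hσ0 : ‖σ0‖ = 1)
    (hsphere : ∀ R ∈ 𝓡, ∀ i ∈ R, ‖σ i‖ = 1)
    (hsphere2 : ∀ R ∈ 𝓡, ∀ i ∈ R, ∀ j ∈ R, ‖τ i j‖ = 1)
    (hund : ∀ R ∈ 𝓡, ∀ i ∈ R, ∀ j ∈ R, ⟪σ i, σ j⟫ = ⟪τ i j, σ0⟫)
    (htri : ∀ R ∈ 𝓡, ∀ i ∈ R, ∀ j ∈ R, ∀ k ∈ R,
      ⟪τ i j, τ j k⟫ = ⟪τ i k, σ0⟫)
    (hloop : ∀ R ∈ 𝓡, ∀ i ∈ R, ∀ j ∈ R, ∀ k ∈ R, ∀ l ∈ R,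
      ⟪τ i j, τ k l⟫ = ⟪τ i k, τ j l⟫)
    (M : Matrix (Fin n) (Fin n) ℝ) (hM : ∀ i j, M i j = ⟪σ i, σ j⟫) :
    M.PosSemidef ∧
    (∀ i j, G.Adj i j → |M i j| ≤ 1) ∧
    (∀ (N : ℕ), 3 ≤ N → ∀ v : Fin N → Fin n, Function.Injective v →
      (∀ k, G.Adj (v k) (v (finRotate N k))) →
      ∀ F : Finset (Fin N), Odd F.card →
        (∑ k ∈ F, M (v k) (v (finRotate N k)))
          - ∑ k ∈ Fᶜ, M (v k) (v (finRotate N k)) ≥ 2 - (N : ℝ)) := by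
  obtain rfl : M = Matrix.gram ℝ σ := Matrix.ext hM
  refine ⟨Matrix.posSemidef_gram ℝ σ, fun i j hij ↦ ?_, fun N hN v hv hadj F hF ↦ ?_⟩
  · obtain ⟨R, hR, hi, hj⟩ := hcovE i j hij
    simpa [hsphere R hR i hi, hsphere R hR j hj] using abs_real_inner_le_norm (σ i) (σ j)
  have : NeZero N := ⟨by omega⟩
  have hsymm : (Matrix.gram ℝ σ).IsSymm := .ext fun i j ↦ real_inner_comm (σ i) (σ j)
  refine (CycleInequality.fin ?_ F hF).ge
  refine G.cycleInequality_of_forall_chordless hsymm (fun N u hN hu hch ↦ ?_) hN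
    (G.isCycleSeq_of_fin hv hadj)
  obtain ⟨R, hR, hmem⟩ := hcirc N hN _ hu.injective_fin hu.adj_finRotate hch.fin
  have hdiag : ∀ i ∈ R, Matrix.gram ℝ σ i i = 1 := fun i hi ↦ by
    rw [Matrix.gram_apply, real_inner_self_eq_norm_sq, hsphere R hR i hi, one_pow]
  exact (triangleIneqOn_gram hσ0 (hsphere R hR) (hsphere2 R hR) (hund R hR) (htri R hR)
    (hloop R hR)).cycleInequality hdiag (hu.mem_of_forall_fin (by omega) hmem) hu.closed

theorem psos4_feasible_gram_in_metric_polytope {n r : ℕ}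
    (G : SimpleGraph (Fin n)) (𝓡 : Set (Set (Fin n)))
    -- covering
    (hcovV : ∀ v : Fin n, ∃ R ∈ 𝓡, v ∈ R)
    (hcovE : ∀ i j, G.Adj i j → ∃ R ∈ 𝓡, i ∈ R ∧ j ∈ R)
    -- circular: every chordless cycle of G is contained in some region
    (hcirc : ∀ (N : ℕ), 3 ≤ N → ∀ v : Fin N → Fin n, Function.Injective v →
      (∀ k, G.Adj (v k) (v (finRotate N k))) →
      (∀ k l : Fin N, k ≠ l → l ≠ finRotate N k → k ≠ finRotate N l →
        ¬ G.Adj (v k) (v l)) →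
      ∃ R ∈ 𝓡, ∀ k, v k ∈ R)
    -- PSOS(4) feasible point
    (σ0 : EuclideanSpace ℝ (Fin r)) (σ : Fin n → EuclideanSpace ℝ (Fin r))
    (τ : Fin n → Fin n → EuclideanSpace ℝ (Fin r))
    (hσ0 : ‖σ0‖ = 1)
    (hsphere : ∀ R ∈ 𝓡, ∀ i ∈ R, ‖σ i‖ = 1)
    (hsphere2 : ∀ R ∈ 𝓡, ∀ i ∈ R, ∀ j ∈ R, ‖τ i j‖ = 1)
    (hund : ∀ R ∈ 𝓡, ∀ i ∈ R, ∀ j ∈ R, ⟪σ i, σ j⟫ = ⟪τ i j, σ0⟫)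
    (hdir : ∀ R ∈ 𝓡, ∀ i ∈ R, ∀ j ∈ R, ⟪σ i, τ i j⟫ = ⟪σ j, σ0⟫)
    (hV : ∀ R ∈ 𝓡, ∀ i ∈ R, ∀ j ∈ R, ∀ k ∈ R, ⟪σ i, τ j k⟫ = ⟪σ k, τ i j⟫)
    (htri : ∀ R ∈ 𝓡, ∀ i ∈ R, ∀ j ∈ R, ∀ k ∈ R,
      ⟪τ i j, τ j k⟫ = ⟪τ i k, σ0⟫)
    (hloop : ∀ R ∈ 𝓡, ∀ i ∈ R, ∀ j ∈ R, ∀ k ∈ R, ∀ l ∈ R,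
      ⟪τ i j, τ k l⟫ = ⟪τ i k, τ j l⟫)
    (M : Matrix (Fin n) (Fin n) ℝ) (hM : ∀ i j, M i j = ⟪σ i, σ j⟫) :
    M.PosSemidef ∧
    (∀ i j, G.Adj i j → |M i j| ≤ 1) ∧
    (∀ (N : ℕ), 3 ≤ N → ∀ v : Fin N → Fin n, Function.Injective v →
      (∀ k, G.Adj (v k) (v (finRotate N k))) →
      ∀ F : Finset (Fin N), Odd F.card →
        (∑ k ∈ F, M (v k) (v (finRotate N k)))
          - ∑ k ∈ Fᶜ, M (v k) (v (finRotate N k)) ≥ 2 - (N : ℝ)) :=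
  psos4_feasible_gram_in_metric_polytope_general G 𝓡 hcovE hcirc σ0 σ τ hσ0 hsphere hsphere2 hund
    htri hloop M hM
end
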